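/- arXiv:1503.07278 — 4 statements merged into one kernel-verified Lean document; each statement's English description precedes it below -/
import Mathlib

section
/- Let α > 1 and let ζ = (ζ_ℝ, ζ_ℂ) ∈ ℝ × ℂ = ℝ³ with Euclidean norm |ζ|. Then the improper integral ∫₀^∞ dx/|ζ − (x^α,0,0)| is at most (α·2^{1/α}/(α−1)) · |ζ|^{1/α}/|ζ_ℂ|, whenever ζ_ℂ ≠ 0. -/
open MeasureTheory Set

noncomputable section

abbrev E3 := WithLp 2 (ℝ × ℂ)

/-- The point `(x^α, 0, 0)` on the nonnegative axis of `ℝ³ = ℝ ⊕ ℂ`. -/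
def axPt (α x : ℝ) : E3 := (WithLp.equiv 2 (ℝ × ℂ)).symm (x ^ α, 0)

/-- The `ℂ`-component of `ζ ∈ ℝ³ = ℝ ⊕ ℂ`. -/
def zC (ζ : E3) : ℂ := ((WithLp.equiv 2 (ℝ × ℂ)) ζ).2

/-!
Split the integral at `x₀ = (2‖ζ‖)^(1/α)`. Every point of the axis is at distance at least
`‖ζ_ℂ‖` from `ζ`, so `[0, x₀]` contributes at most `x₀ / ‖ζ_ℂ‖`. Beyond `x₀` we have
`x^α ≥ 2‖ζ‖`, so the distance is at least `x^α / 2` and the tail contributes at most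
`2 x₀^(1-α) / (α - 1) = x₀ / ((α - 1)‖ζ‖) ≤ x₀ / ((α - 1)‖ζ_ℂ‖)`. The two add up to
`α x₀ / ((α - 1)‖ζ_ℂ‖)`.
-/

lemma norm_axPt (α x : ℝ) : ‖axPt α x‖ = |x ^ α| := by
  simp [axPt]

lemma norm_zC_le_norm (ζ : E3) : ‖zC ζ‖ ≤ ‖ζ‖ :=
  WithLp.norm_snd_le ℝ ζ

lemma zC_sub_axPt (ζ : E3) (α x : ℝ) : zC (ζ - axPt α x) = zC ζ := by
  simp [zC, axPt]

lemma norm_zC_le_norm_sub_axPt (ζ : E3) (α x : ℝ) : ‖zC ζ‖ ≤ ‖ζ - axPt α x‖ :=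
  zC_sub_axPt ζ α x ▸ norm_zC_le_norm _

lemma rpow_sub_norm_le_norm_sub_axPt (ζ : E3) (α x : ℝ) : x ^ α - ‖ζ‖ ≤ ‖ζ - axPt α x‖ :=
  calc x ^ α - ‖ζ‖ ≤ ‖axPt α x‖ - ‖ζ‖ := by rw [norm_axPt]; linarith [le_abs_self (x ^ α)]
    _ ≤ ‖ζ - axPt α x‖ := by rw [norm_sub_rev]; exact norm_sub_norm_le _ _

lemma one_div_norm_sub_axPt_le {ζ : E3} {α x : ℝ} (hx : 0 < x) (hζx : 2 * ‖ζ‖ ≤ x ^ α) :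
    1 / ‖ζ - axPt α x‖ ≤ 2 * x ^ (-α) := by
  have hxα : 0 < x ^ α := Real.rpow_pos_of_pos hx α
  calc 1 / ‖ζ - axPt α x‖ ≤ 1 / (x ^ α / 2) := by
        apply one_div_le_one_div_of_le (by positivity)
        linarith [rpow_sub_norm_le_norm_sub_axPt ζ α x]
    _ = 2 * x ^ (-α) := by rw [Real.rpow_neg hx.le]; field_simp

lemma setLIntegral_Ioi_le_of_le_mul_rpow_neg {f : ℝ → ℝ} {α b x₀ : ℝ} (hα : 1 < α)
    (hx₀ : 0 < x₀) (hb : 0 ≤ b) (hf : ∀ x ∈ Ioi x₀, f x ≤ b * x ^ (-α)) :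
    ∫⁻ x in Ioi x₀, ENNReal.ofReal (f x) ≤ ENNReal.ofReal (b * x₀ ^ (1 - α) / (α - 1)) :=
  calc ∫⁻ x in Ioi x₀, ENNReal.ofReal (f x)
      ≤ ∫⁻ x in Ioi x₀, ENNReal.ofReal (b * x ^ (-α)) :=
        setLIntegral_mono' measurableSet_Ioi fun x hx => ENNReal.ofReal_le_ofReal (hf x hx)
    _ = ENNReal.ofReal (∫ x in Ioi x₀, b * x ^ (-α)) := by
        rw [ofReal_integral_eq_lintegral_ofReal
          ((integrableOn_Ioi_rpow_of_lt (by linarith) hx₀).const_mul b)]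
        filter_upwards [ae_restrict_mem measurableSet_Ioi] with x hx
        have : 0 < x := hx₀.trans hx
        positivity
    _ = ENNReal.ofReal (b * x₀ ^ (1 - α) / (α - 1)) := by
        rw [integral_const_mul, integral_Ioi_rpow_of_lt (by linarith) hx₀, neg_add_eq_sub,
          ← neg_div_neg_eq, neg_neg, neg_sub, mul_div_assoc]

lemma setLIntegral_Ioc_le_of_le {f : ℝ → ℝ} {a x₀ x₁ : ℝ} (ha : 0 ≤ a)
    (hf : ∀ x ∈ Ioc x₀ x₁, f x ≤ a) :
    ∫⁻ x in Ioc x₀ x₁, ENNReal.ofReal (f x) ≤ ENNReal.ofReal (a * (x₁ - x₀)) :=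
  calc ∫⁻ x in Ioc x₀ x₁, ENNReal.ofReal (f x)
      ≤ ∫⁻ _ in Ioc x₀ x₁, ENNReal.ofReal a :=
        setLIntegral_mono' measurableSet_Ioc fun x hx => ENNReal.ofReal_le_ofReal (hf x hx)
    _ = ENNReal.ofReal (a * (x₁ - x₀)) := by
        rw [setLIntegral_const, Real.volume_Ioc, ← ENNReal.ofReal_mul ha]

lemma lintegral_Ioi_zero_le_of_le_of_le_mul_rpow_neg {f : ℝ → ℝ} {α a b x₀ : ℝ} (hα : 1 < α)
    (hx₀ : 0 < x₀) (ha : 0 ≤ a) (hb : 0 ≤ b) (hnear : ∀ x ∈ Ioc 0 x₀, f x ≤ a)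
    (hfar : ∀ x ∈ Ioi x₀, f x ≤ b * x ^ (-α)) :
    ∫⁻ x in Ioi 0, ENNReal.ofReal (f x) ≤ ENNReal.ofReal (a * x₀ + b * x₀ ^ (1 - α) / (α - 1)) := by
  rw [← Ioc_union_Ioi_eq_Ioi hx₀.le, lintegral_union measurableSet_Ioi Ioc_disjoint_Ioi_same,
    ENNReal.ofReal_add (by positivity) (div_nonneg (by positivity) (by linarith))]
  gcongr
  · simpa using setLIntegral_Ioc_le_of_le ha hnear
  · exact setLIntegral_Ioi_le_of_le_mul_rpow_neg hα hx₀ hb hfar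

theorem stmt0 (α : ℝ) (hα : 1 < α) (ζ : E3) (hz : zC ζ ≠ 0) :
    ∫⁻ x in Ioi (0 : ℝ), ENNReal.ofReal (1 / ‖ζ - axPt α x‖) ≤
      ENNReal.ofReal (α * (2 : ℝ) ^ (1 / α) / (α - 1) * ‖ζ‖ ^ (1 / α) / ‖zC ζ‖) := by
  set R := ‖ζ‖
  set c := ‖zC ζ‖
  have hc : 0 < c := norm_pos_iff.mpr hz
  have hcR : c ≤ R := norm_zC_le_norm ζ
  have hR : 0 < R := hc.trans_le hcR
  set x₀ := (2 * R) ^ (1 / α)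
  have hx₀ : 0 < x₀ := by positivity
  have hx₀α : x₀ ^ α = 2 * R := by
    rw [← Real.rpow_mul (by positivity), one_div_mul_cancel (by linarith), Real.rpow_one]
  have hfar : ∀ x ∈ Ioi x₀, 1 / ‖ζ - axPt α x‖ ≤ 2 * x ^ (-α) := fun x hx =>
    one_div_norm_sub_axPt_le (hx₀.trans hx)
      (hx₀α ▸ Real.rpow_le_rpow hx₀.le (le_of_lt hx) (by linarith))
  refine (lintegral_Ioi_zero_le_of_le_of_le_mul_rpow_neg hα hx₀ (by positivity) zero_le_two
    (fun x _ => one_div_le_one_div_of_le hc (norm_zC_le_norm_sub_axPt ζ α x)) hfar).trans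
    (ENNReal.ofReal_le_ofReal ?_)
  have hα1 : 0 < α - 1 := by linarith
  have hfar_mass : 2 * x₀ ^ (1 - α) / (α - 1) ≤ x₀ / ((α - 1) * c) := by
    rw [Real.rpow_sub hx₀, Real.rpow_one, hx₀α,
      show 2 * (x₀ / (2 * R)) / (α - 1) = x₀ / ((α - 1) * R) by field_simp]
    gcongr
  have hx₀_eq : x₀ = 2 ^ (1 / α) * R ^ (1 / α) := Real.mul_rpow zero_le_two hR.le
  calc 1 / c * x₀ + 2 * x₀ ^ (1 - α) / (α - 1) ≤ 1 / c * x₀ + x₀ / ((α - 1) * c) := by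
        linarith
    _ = _ := by rw [hx₀_eq]; field_simp; ring
end
end

section
/- Let Φ: ℝ³ ∖ 𝐥 → (0,∞) be S¹-invariant under rotation of the ℂ-factor of ℝ³ = ℝ ⊕ ℂ, and monotone in the sense that Φ(ζ_ℝ, ζ_ℂ) ≤ Φ(ζ_ℝ, ζ_ℂ') whenever |ζ_ℂ| ≥ |ζ_ℂ'|. Let γ = (γ_ℝ, γ_ℂ): [a,b] → ℝ³ be a smooth path with |γ_ℂ(a)| = |γ_ℂ(b)| = D and |γ_ℂ(t)| ≤ D for all t, and define P_γ(t) = (γ_ℝ(t), γ_ℂ(a)). Then the length of P_γ with respect to the conformal metric Φ·h₀ is at most the length of γ, i.e., ∫_a^b √(Φ(P_γ)) |P_γ'| dt ≤ ∫_a^b √(Φ(γ)) |γ'| dt. -/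
open MeasureTheory Set

noncomputable section

def mk3 (a : ℝ) (z : ℂ) : E3 := (WithLp.equiv 2 (ℝ × ℂ)).symm (a, z)

lemma fst_abs_le_norm_mk3 (r : ℝ) (z : ℂ) : |r| ≤ ‖mk3 r z‖ := by
  rw [WithLp.prod_norm_eq_of_L2, ← Real.sqrt_sq_eq_abs]
  apply Real.sqrt_le_sqrt
  have h1 : ‖(mk3 r z).fst‖ = |r| := rfl
  simp [h1]

theorem stmt6 (Φ : E3 → ℝ)
    (hinv : ∀ (r : ℝ) (z : ℂ) (θ : ℝ),
      Φ (mk3 r (Complex.exp (θ * Complex.I) * z)) = Φ (mk3 r z))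
    (hmono : ∀ (r : ℝ) (z z' : ℂ), ‖z'‖ ≤ ‖z‖ → Φ (mk3 r z) ≤ Φ (mk3 r z'))
    (a b D : ℝ) (hab : a ≤ b)
    (γR : ℝ → ℝ) (γC : ℝ → ℂ) (γR' : ℝ → ℝ) (γC' : ℝ → ℂ)
    (hdR : ∀ t ∈ Icc a b, HasDerivAt γR (γR' t) t)
    (hdC : ∀ t ∈ Icc a b, HasDerivAt γC (γC' t) t)
    (ha : ‖γC a‖ = D) (hb : ‖γC b‖ = D) (hle : ∀ t ∈ Icc a b, ‖γC t‖ ≤ D) :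
    ∫⁻ t in Icc a b, ENNReal.ofReal (Real.sqrt (Φ (mk3 (γR t) (γC a))) * |γR' t|) ≤
      ∫⁻ t in Icc a b,
        ENNReal.ofReal (Real.sqrt (Φ (mk3 (γR t) (γC t))) * ‖mk3 (γR' t) (γC' t)‖) := by
  refine lintegral_mono_ae ?_
  filter_upwards [ae_restrict_mem measurableSet_Icc] with t ht
  apply ENNReal.ofReal_le_ofReal
  apply mul_le_mul
  · exact Real.sqrt_le_sqrt (hmono _ _ _ ((hle t ht).trans_eq ha.symm))
  · exact fst_abs_le_norm_mk3 _ _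
  · exact abs_nonneg _
  · exact Real.sqrt_nonneg _
end
end

section
/- Let (X,p), (Y,q) be pointed metric spaces with a submetry μ: X → Y satisfying μ(p) = q, and let (Y_∞, q_∞) be a pointed metric space. Set δ_{q,μ}(r) = sup{ diam(μ⁻¹(y)) : y ∈ B(q,r) } and assume δ_{q,μ}(r) < ∞. If f: B(q,r) → Y_∞ is an (r,δ)-isometry from (Y,q) to (Y_∞,q_∞), then f ∘ μ restricted to B(p,r) is an (r, δ + δ_{q,μ}(r))-isometry from (X,p) to (Y_∞,q_∞). -/
open Set

/-- `f` is an `(r,ε)`-isometry from `(X,p)` to `(Y,q)`. -/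
def IsApproxIsom {X Y : Type*} [MetricSpace X] [MetricSpace Y]
    (p : X) (q : Y) (r ε : ℝ) (f : X → Y) : Prop :=
  f p = q ∧
  (∀ x ∈ Metric.ball p r, ∀ y ∈ Metric.ball p r, |dist x y - dist (f x) (f y)| < ε) ∧
  Metric.ball q (r - ε) ⊆ ⋃ x ∈ Metric.ball p r, Metric.ball (f x) ε

theorem stmt14 {X Y Z : Type*} [MetricSpace X] [MetricSpace Y] [MetricSpace Z]
    (μ : X → Y)
    (hsub : ∀ (p : X) (s : ℝ), 0 < s →
      μ '' Metric.closedBall p s = Metric.closedBall (μ p) s)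
    (p : X) (q : Y) (hpq : μ p = q) (qinf : Z) (r δ δ' : ℝ) (hr : 0 < r) (hδ : 0 < δ)
    (hδ' : 0 ≤ δ')
    (hfib : ∀ y ∈ Metric.ball q r, ∀ x₁ x₂ : X, μ x₁ = y → μ x₂ = y → dist x₁ x₂ ≤ δ')
    (f : Y → Z) (hf : IsApproxIsom q qinf r δ f) :
    IsApproxIsom p qinf r (δ + δ') (f ∘ μ) := by
  obtain ⟨hfq, hfd, hfsurj⟩ := hf
  -- μ is 1-Lipschitz
  have hlip : ∀ x y : X, dist (μ x) (μ y) ≤ dist x y := by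
    intro x y
    rcases eq_or_lt_of_le (dist_nonneg (x := x) (y := y)) with h | h
    · have hxy : x = y := dist_eq_zero.mp h.symm
      simp [hxy]
    · have hy : y ∈ Metric.closedBall x (dist x y) := by
        simp [Metric.mem_closedBall, dist_comm]
      have := (hsub x (dist x y) h) ▸ Set.mem_image_of_mem μ hy
      simpa [Metric.mem_closedBall, dist_comm] using this
  have hball : ∀ x ∈ Metric.ball p r, μ x ∈ Metric.ball q r := by
    intro x hx
    have h1 : dist (μ x) q ≤ dist x p := by rw [← hpq]; exact hlip x p
    exact lt_of_le_of_lt h1 (Metric.mem_ball.mp hx)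
  -- upper bound: dist x y ≤ dist (μ x) (μ y) + δ'
  have hup : ∀ x ∈ Metric.ball p r, ∀ y ∈ Metric.ball p r,
      dist x y ≤ dist (μ x) (μ y) + δ' := by
    intro x hx y hy
    rcases eq_or_lt_of_le (dist_nonneg (x := μ x) (y := μ y)) with h | h
    · have hxy : μ x = μ y := dist_eq_zero.mp h.symm
      have := hfib (μ y) (hball y hy) x y hxy rfl
      linarith [dist_nonneg (x := μ x) (y := μ y)]
    · have hy' : μ y ∈ Metric.closedBall (μ x) (dist (μ x) (μ y)) := by
        simp [Metric.mem_closedBall, dist_comm]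
      rw [← hsub x (dist (μ x) (μ y)) h] at hy'
      obtain ⟨x', hx', hμx'⟩ := hy'
      have h1 : dist x x' ≤ dist (μ x) (μ y) := by
        simpa [Metric.mem_closedBall, dist_comm] using hx'
      have h2 : dist x' y ≤ δ' := hfib (μ y) (hball y hy) x' y hμx' rfl
      calc dist x y ≤ dist x x' + dist x' y := dist_triangle x x' y
        _ ≤ dist (μ x) (μ y) + δ' := add_le_add h1 h2
  refine ⟨by simp [Function.comp, hpq, hfq], ?_, ?_⟩
  · intro x hx y hy
    have hA := hfd (μ x) (hball x hx) (μ y) (hball y hy)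
    have hB := hup x hx y hy
    have hC := hlip x y
    rw [abs_sub_lt_iff] at hA ⊢
    simp only [Function.comp]
    constructor <;> [linarith [hA.1]; linarith [hA.2]]
  · intro z hz
    have hz' : z ∈ Metric.ball qinf (r - δ) := by
      rw [Metric.mem_ball] at hz ⊢; linarith
    obtain ⟨_, ⟨y, rfl⟩, hy⟩ := hfsurj hz'
    simp only [Set.mem_iUnion, Metric.mem_ball] at hy ⊢
    obtain ⟨hyq, hzy⟩ := hy
    rcases eq_or_lt_of_le (dist_nonneg (x := y) (y := q)) with h | h
    · have hy' : y = q := dist_eq_zero.mp h.symm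
      subst hy'
      exact ⟨p, by simpa using hr, by simp only [Function.comp, hpq]; linarith⟩
    · have hy' : y ∈ μ '' Metric.closedBall p (dist y q) := by
        rw [hsub p _ h, hpq]; simp [Metric.mem_closedBall]
      obtain ⟨x, hx, hμx⟩ := hy'
      have hxp : dist x p < r := lt_of_le_of_lt (by simpa using hx) hyq
      exact ⟨x, hxp, by simp only [Function.comp, hμx]; linarith⟩
end

section
/- Let α > 1, θ > 0, 0 < S < T ≤ ∞ with θ S^α √(S^{−α+1} − T^{−α+1}) ≥ 2R for some R ≥ 1, and let P^{1/(1+α)} = θ√(S^{−α+1}−T^{−α+1}), S' = P^{−1/(1+α)}S, T' = P^{−1/(1+α)}T. Then there is a constant C_α depending only on α such that for all ζ ∈ ℝ³ with |ζ| ≤ R and ζ off the axis, |Φ_{S',P}^{T'}(ζ) − 1/(θ²(α−1))| ≤ C_α R / (θ³ S^α √(S^{−α+1} − T^{−α+1})). -/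
open MeasureTheory Set
noncomputable section
def epow (T : EReal) (e : ℝ) : ℝ := if T = ⊤ then 0 else T.toReal ^ e

lemma E3_norm (w : E3) : ‖w‖ = Real.sqrt (w.fst ^ 2 + ‖w.snd‖ ^ 2) := by
  rw [WithLp.prod_norm_eq_of_nat 2 (by norm_num) w, Real.sqrt_eq_rpow]
  norm_num [Real.norm_eq_abs, sq_abs]

set_option maxHeartbeats 1000000 in
theorem stmt16 (α : ℝ) (hα : 1 < α) :
    ∃ C > (0 : ℝ), ∀ (θ S R P : ℝ) (T : EReal) (ζ : E3),
      0 < θ → 0 < S → (S : EReal) < T → 1 ≤ R → 0 < P →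
      P ^ (1 / (1 + α)) = θ * Real.sqrt (S ^ (1 - α) - epow T (1 - α)) →
      2 * R ≤ θ * S ^ α * Real.sqrt (S ^ (1 - α) - epow T (1 - α)) →
      ‖ζ‖ ≤ R → zC ζ ≠ 0 →
      |(∫⁻ x in {x : ℝ | P ^ (-(1 / (1 + α))) * S < x ∧
            (x : EReal) < ((P ^ (-(1 / (1 + α))) : ℝ) : EReal) * T},
          ENNReal.ofReal (1 / ‖ζ - P • axPt α x‖)).toReal - 1 / (θ ^ 2 * (α - 1))| ≤
        C * R / (θ ^ 3 * S ^ α * Real.sqrt (S ^ (1 - α) - epow T (1 - α))) := by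
  have hα1 : (0:ℝ) < α - 1 := by linarith
  have hα0 : (0:ℝ) < α := by linarith
  refine ⟨2 / (α - 1), by positivity, ?_⟩
  intro θ S R P T ζ hθ hS hST hR hP hPdef h2R hζ hz
  set D := Real.sqrt (S ^ (1 - α) - epow T (1 - α)) with hDdef
  set Q := P ^ (1 / (1 + α)) with hQdef
  have hQ0 : 0 < Q := Real.rpow_pos_of_pos hP _
  have hQD : Q = θ * D := hPdef
  have hD0 : 0 < D := by nlinarith
  have harg : 0 < S ^ (1 - α) - epow T (1 - α) := Real.sqrt_pos.mp (hDdef ▸ hD0)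
  have hsq : D ^ 2 = S ^ (1 - α) - epow T (1 - α) := Real.sq_sqrt harg.le
  have h1α : (0:ℝ) < 1 + α := by linarith
  have hPQ : P = Q ^ ((1:ℝ) + α) := by
    rw [hQdef, ← Real.rpow_mul hP.le, one_div_mul_cancel h1α.ne', Real.rpow_one]
  have hPn : P ^ (-(1 / (1 + α))) = Q⁻¹ := by
    rw [Real.rpow_neg hP.le, hQdef]
  set S' := Q⁻¹ * S with hS'def
  have hS'0 : 0 < S' := by positivity
  have hQinv : ∀ e : ℝ, (Q⁻¹ : ℝ) ^ e = Q ^ (-e) := by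
    intro e
    rw [Real.inv_rpow hQ0.le, ← Real.rpow_neg hQ0.le]
  have hPS' : P * S' ^ α = Q * S ^ α := by
    rw [hS'def, Real.mul_rpow (inv_nonneg.mpr hQ0.le) hS.le, hQinv, hPQ,
      ← mul_assoc, ← Real.rpow_add hQ0]
    norm_num
  have hQS : 2 * R ≤ Q * S ^ α := by
    have : θ * S ^ α * D = θ * D * S ^ α := by ring
    rw [hQD]; linarith
  -- the explicit norm function
  set N : ℝ → ℝ := fun x => Real.sqrt ((ζ.fst - P * x ^ α) ^ 2 + ‖ζ.snd‖ ^ 2) with hNdef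
  have hz' : ζ.snd ≠ 0 := hz
  have hN0 : ∀ x, 0 < N x := fun x =>
    Real.sqrt_pos.mpr (add_pos_of_nonneg_of_pos (sq_nonneg _)
      (pow_pos (norm_pos_iff.mpr hz') 2))
  have hsnd : ∀ x : ℝ, (ζ - P • axPt α x).snd = ζ.snd := fun x => by
    show ζ.snd - P • (0:ℂ) = ζ.snd; simp
  have hnormEq : ∀ x : ℝ, ‖ζ - P • axPt α x‖ = N x := fun x => by
    rw [E3_norm, hsnd x]
    rfl
  have hnormP : ∀ x : ℝ, 0 < x → ‖P • axPt α x‖ = P * x ^ α := by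
    intro x hx
    rw [E3_norm]
    show Real.sqrt ((P * x ^ α) ^ 2 + ‖P • (0:ℂ)‖ ^ 2) = P * x ^ α
    rw [smul_zero]
    simp [Real.sqrt_sq (by positivity : (0:ℝ) ≤ P * x ^ α)]
  -- reduce the domain of integration
  obtain ⟨B, hBeq, hBsub, hBmeas, hJ⟩ :
      ∃ B : Set ℝ, {x : ℝ | Q⁻¹ * S < x ∧ (x : EReal) < ((Q⁻¹ : ℝ) : EReal) * T} = B ∧
        B ⊆ Ioi S' ∧ MeasurableSet B ∧
        ∫ x in B, x ^ (-α) =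
          (S' ^ (1 - α) - Q ^ (α - 1) * epow T (1 - α)) / (α - 1) := by
    have hne1 : α - 1 ≠ 0 := hα1.ne'
    have hne2 : (1:ℝ) - α ≠ 0 := by linarith
    rcases eq_or_ne T ⊤ with hT | hT
    · refine ⟨Ioi S', ?_, le_refl _, measurableSet_Ioi, ?_⟩
      · ext x
        simp [hT, hS'def, EReal.coe_mul_top_of_pos (by positivity : (0:ℝ) < Q⁻¹),
          EReal.coe_lt_top]
      · rw [integral_Ioi_rpow_of_lt (by linarith : -α < -1) hS'0]
        have h1 : -α + 1 = 1 - α := by ring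
        have he : epow T (1 - α) = 0 := by simp [epow, hT]
        rw [h1, he, mul_zero, sub_zero]
        field_simp
        ring
    · have hTbot : T ≠ ⊥ := (bot_le.trans_lt hST).ne'
      set t := T.toReal with htdef
      have hTeq : T = ((t : ℝ) : EReal) := (EReal.coe_toReal hT hTbot).symm
      have hSt : S < t := by
        rw [hTeq] at hST
        exact_mod_cast hST
      have ht0 : 0 < t := hS.trans hSt
      have hepow : epow T (1 - α) = t ^ (1 - α) := by
        rw [epow, if_neg hT]
      refine ⟨Ioo S' (Q⁻¹ * t), ?_, Ioo_subset_Ioi_self, measurableSet_Ioo, ?_⟩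
      · ext x
        rw [hTeq]
        simp [hS'def, ← EReal.coe_mul, EReal.coe_lt_coe_iff, Ioo]
      · have hab : S' ≤ Q⁻¹ * t := by
          show Q⁻¹ * S ≤ Q⁻¹ * t
          exact mul_le_mul_of_nonneg_left hSt.le (by positivity)
        rw [← integral_Ioc_eq_integral_Ioo, ← intervalIntegral.integral_of_le hab,
          integral_rpow (Or.inr ⟨by linarith, by
            simp only [uIcc_of_le hab, mem_Icc, not_and]
            intro h; linarith⟩)]
        have h1 : -α + 1 = 1 - α := by ring
        rw [h1, hepow]
        have hT' : (Q⁻¹ * t) ^ (1 - α) = Q ^ (α - 1) * t ^ (1 - α) := by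
          rw [Real.mul_rpow (by positivity) ht0.le, hQinv]
          norm_num
        rw [hT']
        field_simp
        ring
  rw [hPn, hBeq]
  -- rewrite integrand
  have hfeq : ∀ x : ℝ, (1:ℝ) / ‖ζ - P • axPt α x‖ = 1 / N x := fun x => by
    rw [hnormEq]
  simp only [hfeq]
  -- pointwise facts on B
  set K : ℝ := 2 * R / (Q * S ^ α) with hKdef
  have hQSα : 0 < Q * S ^ α := by positivity
  have hK0 : 0 < K := by positivity
  set g : ℝ → ℝ := fun x => P⁻¹ * x ^ (-α) with hgdef
  have hkey : ∀ x ∈ B, P * x ^ α / 2 ≤ N x ∧ |N x - P * x ^ α| ≤ R ∧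
      Q * S ^ α ≤ P * x ^ α := by
    intro x hxB
    have hx' : S' < x := hBsub hxB
    have hx0 : 0 < x := hS'0.trans hx'
    have hxα : Q * S ^ α ≤ P * x ^ α := by
      rw [← hPS']
      have := Real.rpow_le_rpow hS'0.le hx'.le hα0.le
      nlinarith
    have hb : ‖P • axPt α x‖ = P * x ^ α := hnormP x hx0
    have hlow : P * x ^ α - R ≤ N x := by
      have h1 : ‖P • axPt α x‖ - ‖ζ‖ ≤ ‖P • axPt α x - ζ‖ := norm_sub_norm_le _ _
      rw [norm_sub_rev, hnormEq, hb] at h1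
      linarith
    have habs : |N x - P * x ^ α| ≤ R := by
      have h1 : |‖ζ - P • axPt α x‖ - ‖-(P • axPt α x)‖| ≤ ‖ζ - P • axPt α x - -(P • axPt α x)‖ :=
        abs_norm_sub_norm_le _ _
      rw [sub_neg_eq_add, sub_add_cancel, norm_neg, hnormEq, hb] at h1
      exact h1.trans hζ
    refine ⟨?_, habs, hxα⟩
    have : 2 * R ≤ P * x ^ α := hQS.trans hxα
    linarith
  have hgpos : ∀ x : ℝ, 0 < x → 0 < g x := by
    intro x hx
    have : 0 < x ^ (-α) := Real.rpow_pos_of_pos hx _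
    positivity
  have hginv : ∀ x : ℝ, 0 < x → g x = 1 / (P * x ^ α) := by
    intro x hx
    show P⁻¹ * x ^ (-α) = 1 / (P * x ^ α)
    rw [Real.rpow_neg hx.le]
    have hxα : (0:ℝ) < x ^ α := Real.rpow_pos_of_pos hx _
    field_simp
  -- integrability
  have hgi : IntegrableOn g B := by
    have h1 : IntegrableOn (fun x : ℝ => x ^ (-α)) (Ioi S') :=
      integrableOn_Ioi_rpow_of_lt (by linarith : -α < -1) hS'0
    have h2 : IntegrableOn (fun x : ℝ => P⁻¹ * x ^ (-α)) (Ioi S') := h1.const_mul P⁻¹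
    exact h2.mono_set hBsub
  have hfm : AEStronglyMeasurable (fun x => 1 / N x) (volume.restrict B) := by
    have hNc : ContinuousOn N (Ioi (0:ℝ)) := by
      apply ContinuousOn.sqrt
      apply ContinuousOn.add _ continuousOn_const
      apply ContinuousOn.pow
      exact continuousOn_const.sub (continuousOn_const.mul
        (continuousOn_id.rpow_const (fun x hx => Or.inl (ne_of_gt hx))))
    have hc : ContinuousOn (fun x => 1 / N x) B := by
      apply ContinuousOn.div continuousOn_const
      · exact hNc.mono (fun x hx => hS'0.trans (hBsub hx))
      · exact fun x _ => (hN0 x).ne'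
    exact hc.aestronglyMeasurable hBmeas
  have hfi : IntegrableOn (fun x => 1 / N x) B := by
    apply Integrable.mono (hgi.const_mul 2) hfm
    rw [ae_restrict_iff' hBmeas]
    refine ae_of_all _ fun x hxB => ?_
    obtain ⟨h1, _, h3⟩ := hkey x hxB
    have hx0 : 0 < x := hS'0.trans (hBsub hxB)
    have hM0 : 0 < P * x ^ α := lt_of_lt_of_le (by linarith) h3
    have hg0 := hgpos x hx0
    rw [Real.norm_eq_abs, Real.norm_eq_abs, abs_of_pos (one_div_pos.mpr (hN0 x)),
      abs_of_pos (by linarith [hgpos x hx0] : (0:ℝ) < 2 * g x), hginv x hx0]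
    rw [div_le_iff₀ (hN0 x)]
    have : 1 / (P * x ^ α) * (P * x ^ α / 2) ≤ 1 / (P * x ^ α) * N x := by
      apply mul_le_mul_of_nonneg_left h1 (by positivity)
    calc (1:ℝ) = 2 * (1 / (P * x ^ α)) * (P * x ^ α / 2) := by field_simp
      _ ≤ 2 * (1 / (P * x ^ α)) * N x := by
          apply mul_le_mul_of_nonneg_left h1 (by positivity)
  -- value of comparison integral
  have hgval : ∫ x in B, g x = 1 / (θ ^ 2 * (α - 1)) := by
    rw [hgdef]
    rw [MeasureTheory.integral_const_mul, hJ]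
    have hS'pow : S' ^ (1 - α) = Q ^ (α - 1) * S ^ (1 - α) := by
      rw [hS'def, Real.mul_rpow (by positivity) hS.le, hQinv]
      norm_num
    rw [hS'pow, hPQ]
    have hnum : Q ^ (α - 1) * S ^ (1 - α) - Q ^ (α - 1) * epow T (1 - α)
        = Q ^ (α - 1) * D ^ 2 := by rw [hsq]; ring
    rw [hnum]
    have hQ1α : Q ^ ((1:ℝ) + α) = Q ^ (α - 1) * Q ^ (2:ℝ) := by
      rw [← Real.rpow_add hQ0]; congr 1; ring
    rw [hQ1α]
    have hQ2 : Q ^ (2:ℝ) = θ ^ 2 * D ^ 2 := by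
      rw [show (2:ℝ) = ((2:ℕ):ℝ) by norm_num, Real.rpow_natCast, hQD]; ring
    rw [hQ2]
    have hQα1 : (0:ℝ) < Q ^ (α - 1) := Real.rpow_pos_of_pos hQ0 _
    field_simp
  -- main estimate
  have hlin : (∫⁻ x in B, ENNReal.ofReal (1 / N x)).toReal = ∫ x in B, 1 / N x :=
    (integral_eq_lintegral_of_nonneg_ae
      (ae_of_all _ fun x => by positivity) hfm).symm
  rw [hlin]
  have hptw : ∀ x ∈ B, |1 / N x - g x| ≤ K * g x := by
    intro x hxB
    obtain ⟨h1, h2, h3⟩ := hkey x hxB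
    have hx0 : 0 < x := hS'0.trans (hBsub hxB)
    set M := P * x ^ α with hM
    have hM0 : 0 < M := lt_of_lt_of_le hQSα h3
    have hNx := hN0 x
    rw [hginv x hx0]
    have e1 : 1 / N x - 1 / M = (M - N x) / (N x * M) := by
      field_simp
    rw [e1, abs_div, abs_of_pos (by positivity : (0:ℝ) < N x * M), abs_sub_comm]
    have hKM : K * (1 / M) = 2 * R / (Q * S ^ α * M) := by
      rw [hKdef]
      field_simp
    rw [hKM, div_le_div_iff₀ (by positivity) (by positivity)]
    have hNM : Q * S ^ α ≤ 2 * N x := by linarith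
    have hhint := mul_le_mul_of_nonneg_right hNM (by positivity : (0:ℝ) ≤ R * M)
    calc |N x - M| * (Q * S ^ α * M) ≤ R * (Q * S ^ α * M) :=
          mul_le_mul_of_nonneg_right h2 (by positivity)
      _ ≤ 2 * R * (N x * M) := by nlinarith [hhint]
  have hmain : |(∫ x in B, 1 / N x) - 1 / (θ ^ 2 * (α - 1))| ≤ K * (1 / (θ ^ 2 * (α - 1))) := by
    rw [← hgval, ← integral_sub hfi hgi]
    calc |∫ x in B, (1 / N x - g x)|
        ≤ ∫ x in B, |1 / N x - g x| := by
          simpa [Real.norm_eq_abs] using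
            norm_integral_le_integral_norm (μ := volume.restrict B) (fun x => 1 / N x - g x)
      _ ≤ ∫ x in B, K * g x := by
          apply setIntegral_mono_on ((hfi.sub hgi).abs) (hgi.const_mul K) hBmeas hptw
      _ = K * ∫ x in B, g x := MeasureTheory.integral_const_mul _ _
  refine hmain.trans (le_of_eq ?_)
  rw [hKdef, hQD]
  field_simp
end
end
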